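/- arXiv:math/0102096 — 2 statements merged into one kernel-verified Lean document; each statement's English description precedes it below -/
import Mathlib

section
/- Let K be a field, let a₃, b₄ ∈ K[x₁,x₂,x₃,x₄], and let (x₀,…,x₄) ∈ K⁵ satisfy x₀²x₁x₂ + x₀·a₃(x₁,…,x₄) + b₄(x₁,…,x₄) = 0 and x₁ ≠ 0. Set y₁ = x₀x₁ and y₂ = −(x₀x₁x₂ + a₃(x₁,…,x₄))/x₁. Then y₁x₂ + y₂x₁ + a₃(x₁,…,x₄) = 0 and y₁y₂ = b₄(x₁,…,x₄). Thus the birational map X₄ ⇸ ℙ(1,1,1,1,2,2), (x₀:…:x₄) ↦ (x₁:x₂:x₃:x₄:y₁:y₂), carries the quartic onto the codimension-2 weighted complete intersection Y₃,₄ cut out by one cubic and one quartic equation of this shape (here y₂ differs by a sign from the paper's coordinate, which changes the signs in the two equations). -/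
open MvPolynomial

/-- Let `K` be a field, `a₃, b₄ ∈ K[x₁,…,x₄]`, and let
`(x₀,…,x₄) ∈ K⁵` satisfy `x₀²x₁x₂ + x₀·a₃(x₁,…,x₄) + b₄(x₁,…,x₄) = 0` with `x₁ ≠ 0`.
Set `y₁ = x₀x₁` and `y₂ = −(x₀x₁x₂ + a₃(x₁,…,x₄))/x₁`. Then
`y₁x₂ + y₂x₁ + a₃(x₁,…,x₄) = 0` and `y₁y₂ = b₄(x₁,…,x₄)`. -/
theorem quartic_to_Y34 (K : Type*) [Field K]
    (a₃ b₄ : MvPolynomial (Fin 4) K)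
    (x : Fin 5 → K)
    (hF : x 0 ^ 2 * x 1 * x 2 + x 0 * eval (x ∘ Fin.succ) a₃ + eval (x ∘ Fin.succ) b₄ = 0)
    (hx1 : x 1 ≠ 0)
    (y₁ y₂ : K)
    (hy₁ : y₁ = x 0 * x 1)
    (hy₂ : y₂ = -(x 0 * x 1 * x 2 + eval (x ∘ Fin.succ) a₃) / x 1) :
    y₁ * x 2 + y₂ * x 1 + eval (x ∘ Fin.succ) a₃ = 0 ∧
      y₁ * y₂ = eval (x ∘ Fin.succ) b₄ := by
  subst hy₁ hy₂
  refine ⟨by field_simp; ring, ?_⟩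
  field_simp
  linear_combination -hF
end

section
/- With F, y, z defined as in the elliptic-involution construction, consider the 3×3 matrix M with rows (a₃, y, b₄), (x₂b₄ − a₂a₃, z, a₃(y − b₃)), (a₁a₃ − x₂y, a₃b₁, z + a₃b₂), so that M·(x₀, x₁, 1)ᵗ = (F, x₂x₀F, 0)ᵗ. Then det M lies both in the ideal generated by F and in the ideal generated by a₃ in A[x₀,…,x₄]; i.e., there exist polynomials G, H with det M = G·F = a₃·H. (Dividing by a₃ yields the equation, quadratic in z, of the midpoint Z₁₀ ⊂ ℙ(1,1,1,3,5) of the link.) -/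
open MvPolynomial Matrix

lemma my_det_fin_three_of {R : Type*} [CommRing R] (a b c d e f g h i : R) :
    (!![a, b, c; d, e, f; g, h, i]).det =
      a * e * i - a * f * h - b * d * i + b * f * g + c * d * h - c * e * g := by
  rw [Matrix.det_fin_three]
  simp [Matrix.cons_val_zero, Matrix.cons_val_one]

set_option maxHeartbeats 4000000 in
/-- With `F`, `y`, `z` as in the elliptic-involution construction,
the 3×3 matrix `M` with rows `(a₃, y, b₄)`, `(x₂b₄ − a₂a₃, z, a₃(y − b₃))`,
`(a₁a₃ − x₂y, a₃b₁, z + a₃b₂)` satisfies `M·(x₀,x₁,1)ᵗ = (F, x₂x₀F, 0)ᵗ`, and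
`det M` lies both in the ideal generated by `F` and in the ideal generated by `a₃`:
there exist `G`, `H` with `det M = G·F = a₃·H`. -/
theorem elliptic_involution_determinantal_format (A : Type*) [CommRing A]
    (a₁ a₂ a₃ b₁ b₂ b₃ b₄ : MvPolynomial (Fin 3) A)
    (ρ : MvPolynomial (Fin 3) A →ₐ[A] MvPolynomial (Fin 5) A)
    (hρ : ρ = rename (fun i : Fin 3 => (i.succ.succ : Fin 5)))
    (F y z : MvPolynomial (Fin 5) A)
    (hF : F = X 2 * X 0 ^ 2 * X 1 + ρ a₁ * X 0 * X 1 ^ 2 + ρ b₁ * X 1 ^ 3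
        + ρ a₂ * X 0 * X 1 + ρ b₂ * X 1 ^ 2 + ρ a₃ * X 0 + ρ b₃ * X 1 + ρ b₄)
    (hy : y = X 2 * X 0 ^ 2 + ρ a₁ * X 0 * X 1 + ρ b₁ * X 1 ^ 2
        + ρ a₂ * X 0 + ρ b₂ * X 1 + ρ b₃)
    (hz : z = X 2 * X 0 * y - ρ a₁ * ρ a₃ * X 0 - ρ a₃ * ρ b₁ * X 1 - ρ a₃ * ρ b₂)
    (M : Matrix (Fin 3) (Fin 3) (MvPolynomial (Fin 5) A))
    (hM : M = !![ρ a₃, y, ρ b₄;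
                 X 2 * ρ b₄ - ρ a₂ * ρ a₃, z, ρ a₃ * (y - ρ b₃);
                 ρ a₁ * ρ a₃ - X 2 * y, ρ a₃ * ρ b₁, z + ρ a₃ * ρ b₂]) :
    M.mulVec ![X 0, X 1, 1] = ![F, X 2 * X 0 * F, 0] ∧
      ∃ G H : MvPolynomial (Fin 5) A, M.det = G * F ∧ M.det = ρ a₃ * H := by
  subst hM hz hy hF
  set G' : MvPolynomial (Fin 5) A :=
    -(ρ a₂ * ρ a₃ * ρ b₁) + ρ a₁ * ρ a₃ * ρ b₂ - X 2 * ρ b₂ * ρ b₃ + X 2 * ρ b₁ * ρ b₄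
      + X 1 * ρ a₁ * ρ a₃ * ρ b₁ - X 1 * X 2 * ρ b₂ ^ 2 - X 1 * X 2 * ρ b₁ * ρ b₃
      - 2 * X 1 ^ 2 * X 2 * ρ b₁ * ρ b₂ - X 1 ^ 3 * X 2 * ρ b₁ ^ 2
      + X 0 * ρ a₁ ^ 2 * ρ a₃ - X 0 * X 2 * ρ a₃ * ρ b₁ - X 0 * X 2 * ρ a₂ * ρ b₂
      - X 0 * X 2 * ρ a₁ * ρ b₃ - X 0 * X 1 * X 2 * ρ a₂ * ρ b₁
      - 2 * X 0 * X 1 * X 2 * ρ a₁ * ρ b₂ - 2 * X 0 * X 1 ^ 2 * X 2 * ρ a₁ * ρ b₁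
      - X 0 ^ 2 * X 2 * ρ a₁ * ρ a₂ - X 0 ^ 2 * X 2 ^ 2 * ρ b₂
      - X 0 ^ 2 * X 1 * X 2 * ρ a₁ ^ 2 - X 0 ^ 2 * X 1 * X 2 ^ 2 * ρ b₁
      - X 0 ^ 3 * X 2 ^ 2 * ρ a₁ with hG'
  refine ⟨?_, ρ a₃ * G',
    G' * (X 2 * X 0 ^ 2 * X 1 + ρ a₁ * X 0 * X 1 ^ 2 + ρ b₁ * X 1 ^ 3
        + ρ a₂ * X 0 * X 1 + ρ b₂ * X 1 ^ 2 + ρ a₃ * X 0 + ρ b₃ * X 1 + ρ b₄), ?_, ?_⟩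
  · funext i
    fin_cases i <;>
      simp [Matrix.mulVec, dotProduct, Fin.sum_univ_three] <;> ring
  · rw [my_det_fin_three_of]
    rw [hG']
    ring
  · rw [my_det_fin_three_of]
    rw [hG']
    ring
end
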